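/- Let L > 0 and δ > 0. Then for every x ∈ ℝ with |x| < L/2, one has 0 ≤ 1/2 − A_δ[1](x) ≤ (2δ/π) · ( 1/(L/2 − x) + 1/(L/2 + x) ), where A_δ[1](x) = (1/π) ∫_{−L/2}^{L/2} δ/((x−y)² + 4δ²) dy. -/

import Mathlib

open MeasureTheory Real

/-!
Integrating `δ / ((x - y)² + 4δ²)` gives `½ arctan ((y - x) / 2δ)`, so `A_δ[1](x)` equals
`(arctan a + arctan b) / 2π` with `a = (L/2 - x) / 2δ` and `b = (L/2 + x) / 2δ`. Hence
`1/2 - A_δ[1](x)` is `1/2π` times the sum of the two tails `π/2 - arctan a` and `π/2 - arctan b`,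
and each tail `π/2 - arctan t = arctan t⁻¹` lies between `0` and `t⁻¹`.
-/

theorem Real.arctan_le_self {t : ℝ} (ht : 0 ≤ t) : arctan t ≤ t := by
  simpa only [tan_arctan] using le_tan (arctan_nonneg.mpr ht) (arctan_lt_pi_div_two t)

theorem Real.pi_div_two_sub_arctan_le_inv {t : ℝ} (ht : 0 < t) : π / 2 - arctan t ≤ t⁻¹ := by
  rw [← arctan_inv_of_pos ht]
  exact arctan_le_self (inv_nonneg.mpr ht.le)

theorem hasDerivAt_half_arctan_sub_div {δ : ℝ} (hδ : δ ≠ 0) (x y : ℝ) :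
    HasDerivAt (fun y => arctan ((y - x) / (2 * δ)) / 2) (δ / ((x - y) ^ 2 + 4 * δ ^ 2)) y := by
  have hlin : HasDerivAt (fun y : ℝ => (y - x) / (2 * δ)) (1 / (2 * δ)) y := by
    simpa using ((hasDerivAt_id y).sub_const x).div_const (2 * δ)
  refine ((hasDerivAt_arctan _).comp y hlin).div_const 2 |>.congr_deriv ?_
  have : (x - y) ^ 2 + 4 * δ ^ 2 ≠ 0 := by positivity
  field_simp
  ring

theorem integral_poissonKernel {δ : ℝ} (hδ : δ ≠ 0) (x a b : ℝ) :
    ∫ y in a..b, δ / ((x - y) ^ 2 + 4 * δ ^ 2)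
      = (arctan ((b - x) / (2 * δ)) - arctan ((a - x) / (2 * δ))) / 2 := by
  have hcont : Continuous fun y : ℝ => δ / ((x - y) ^ 2 + 4 * δ ^ 2) :=
    continuous_const.div (by fun_prop) fun y => by positivity
  rw [intervalIntegral.integral_eq_sub_of_hasDerivAt
    (fun y _ => hasDerivAt_half_arctan_sub_div hδ x y) (hcont.intervalIntegrable a b)]
  ring

theorem adelta_one_tail_bound_general (L δ : ℝ) (hδ : 0 < δ) (x : ℝ)
    (hx : |x| < L/2) :
    0 ≤ 1/2 - (1/Real.pi) * (∫ y in (-(L/2))..(L/2), δ/((x - y)^2 + 4*δ^2)) ∧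
    1/2 - (1/Real.pi) * (∫ y in (-(L/2))..(L/2), δ/((x - y)^2 + 4*δ^2))
      ≤ (2*δ/Real.pi) * (1/(L/2 - x) + 1/(L/2 + x)) := by
  obtain ⟨hx₁, hx₂⟩ := abs_lt.mp hx
  have hr : 0 < L/2 - x := by linarith
  have hl : 0 < L/2 + x := by linarith
  set a := (L/2 - x) / (2 * δ) with ha
  set b := (L/2 + x) / (2 * δ) with hb
  have htail :
      1/2 - (1/π) * (∫ y in (-(L/2))..(L/2), δ/((x - y)^2 + 4*δ^2))
        = ((π/2 - arctan a) + (π/2 - arctan b)) / (2 * π) := by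
    rw [integral_poissonKernel hδ.ne', ← ha, show (-(L/2) - x) / (2 * δ) = -b by ring, arctan_neg]
    field_simp
    ring
  have hta := pi_div_two_sub_arctan_le_inv (show 0 < a by positivity)
  have htb := pi_div_two_sub_arctan_le_inv (show 0 < b by positivity)
  rw [ha, inv_div] at hta
  rw [hb, inv_div] at htb
  rw [htail]
  refine ⟨div_nonneg (by linarith [arctan_lt_pi_div_two a, arctan_lt_pi_div_two b]) (by positivity),
    ?_⟩
  calc ((π/2 - arctan a) + (π/2 - arctan b)) / (2 * π)
      ≤ (2 * δ / (L/2 - x) + 2 * δ / (L/2 + x)) / (2 * π) := by gcongr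
    _ = (δ/π) * (1/(L/2 - x) + 1/(L/2 + x)) := by field_simp
    _ ≤ (2*δ/π) * (1/(L/2 - x) + 1/(L/2 + x)) := by gcongr; linarith

/-- For `L > 0`, `δ > 0` and `|x| < L/2`, one has
`0 ≤ 1/2 − A_δ[1](x) ≤ (2δ/π)·(1/(L/2 − x) + 1/(L/2 + x))`, where
`A_δ[1](x) = (1/π) ∫_{−L/2}^{L/2} δ/((x−y)² + 4δ²) dy`. -/
theorem adelta_one_tail_bound (L δ : ℝ) (hL : 0 < L) (hδ : 0 < δ) (x : ℝ)
    (hx : |x| < L/2) :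
    0 ≤ 1/2 - (1/Real.pi) * (∫ y in (-(L/2))..(L/2), δ/((x - y)^2 + 4*δ^2)) ∧
    1/2 - (1/Real.pi) * (∫ y in (-(L/2))..(L/2), δ/((x - y)^2 + 4*δ^2))
      ≤ (2*δ/Real.pi) * (1/(L/2 - x) + 1/(L/2 + x)) :=
  adelta_one_tail_bound_general L δ hδ x hx
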